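/- Moreover, √N·|F^N(y) − f(y)| ≤ 2λ K (max_i g_i / min_i g_i) · √N·|N*/N − γ| for every y in the probability simplex; hence if √N(N*/N − γ) → 0 then √N·sup_{y∈Δ}|F^N(y) − f(y)| → 0. -/

import Mathlib

open Finset

/-!
In `F^N(y) − f(y)` every term not carrying the arrival rate cancels, leaving
`λ (N*/N − γ) (e_{K-1} − w)` with `w_j = y_j g_j / ∑ᵢ yᵢ gᵢ`. Both `e_{K-1}` and `w` lie in the
simplex, so have Euclidean norm at most `1`; hence `|F^N(y) − f(y)| ≤ 2λ |N*/N − γ|` uniformly in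
`y`, and this implies the stated bound since `K ≥ 1` and `max g / min g ≥ 1`.
-/

lemma EuclideanSpace.norm_le_one_of_mem_stdSimplex {ι : Type*} [Fintype ι]
    {w : EuclideanSpace ℝ ι} (hw : w.ofLp ∈ stdSimplex ℝ ι) : ‖w‖ ≤ 1 := by
  obtain ⟨hw0, hw1⟩ := hw
  rw [EuclideanSpace.norm_eq, Real.sqrt_le_one, ← hw1]
  refine sum_le_sum fun i _ => ?_
  have hwi : w i ≤ 1 := hw1 ▸ single_le_sum (fun j _ => hw0 j) (mem_univ i)
  rw [Real.norm_of_nonneg (hw0 i)]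
  nlinarith [hw0 i]

section SizeBiased

variable {ι : Type*} [Fintype ι]

noncomputable def sizeBiased (g y : ι → ℝ) : ι → ℝ := fun j => y j * g j / ∑ i, y i * g i

lemma sizeBiased_mem_stdSimplex {g y : ι → ℝ} (hg : ∀ i, 0 < g i) (hy : y ∈ stdSimplex ℝ ι) :
    sizeBiased g y ∈ stdSimplex ℝ ι := by
  obtain ⟨hy0, hy1⟩ := hy
  have hterm : ∀ i, 0 ≤ y i * g i := fun i => mul_nonneg (hy0 i) (hg i).le
  obtain ⟨i, -, hi⟩ := exists_lt_of_sum_lt (s := univ) (f := fun _ => (0 : ℝ)) (g := y)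
    (by simp [hy1])
  have hS : 0 < ∑ i, y i * g i := sum_pos' (fun i _ => hterm i) ⟨i, mem_univ i, mul_pos hi (hg i)⟩
  refine ⟨fun j => div_nonneg (hterm j) hS.le, ?_⟩
  simp only [sizeBiased, ← sum_div, div_self hS.ne']

end SizeBiased

section MeanFieldDrift

variable {K : ℕ} (KU : ℕ) (lam mu : ℝ) (p : Fin K → Fin K → ℝ) (g : Fin K → ℝ)

noncomputable def meanFieldDrift (c : ℝ) (y : EuclideanSpace ℝ (Fin K)) : EuclideanSpace ℝ (Fin K) :=
  WithLp.toLp 2 (fun j : Fin K =>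
    (∑ k : Fin K, if max KU (j : ℕ) ≤ (k : ℕ) then mu * p k j * y k else 0)
      + (if (j : ℕ) = K - 1 then lam * c else 0)
      - (if KU ≤ (j : ℕ) then mu * y j else 0)
      - lam * c * y j * g j / (∑ i, y i * g i))

lemma meanFieldDrift_sub (hK : 0 < K) (c c' : ℝ) (y : EuclideanSpace ℝ (Fin K)) :
    meanFieldDrift KU lam mu p g c y - meanFieldDrift KU lam mu p g c' y =
      (lam * (c - c')) • (EuclideanSpace.single ⟨K - 1, by omega⟩ 1
        - WithLp.toLp 2 (sizeBiased g y)) := by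
  ext j
  simp only [meanFieldDrift, sizeBiased, PiLp.sub_apply, PiLp.smul_apply, PiLp.single_apply,
    Fin.ext_iff, smul_eq_mul]
  split_ifs <;> ring

lemma norm_meanFieldDrift_sub_le (hK : 0 < K) (hlam : 0 ≤ lam) (hg : ∀ i, 0 < g i) (c c' : ℝ)
    {y : EuclideanSpace ℝ (Fin K)} (hy : y.ofLp ∈ stdSimplex ℝ (Fin K)) :
    ‖meanFieldDrift KU lam mu p g c y - meanFieldDrift KU lam mu p g c' y‖ ≤
      2 * lam * |c - c'| := by
  have hw : ‖WithLp.toLp 2 (sizeBiased g y)‖ ≤ 1 :=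
    EuclideanSpace.norm_le_one_of_mem_stdSimplex (sizeBiased_mem_stdSimplex hg hy)
  rw [meanFieldDrift_sub KU lam mu p g hK, norm_smul, Real.norm_eq_abs, abs_mul,
    abs_of_nonneg hlam]
  calc lam * |c - c'| * ‖EuclideanSpace.single ⟨K - 1, by omega⟩ 1
          - WithLp.toLp 2 (sizeBiased g y)‖
      ≤ lam * |c - c'| * (1 + 1) := by
        gcongr
        refine (norm_sub_le _ _).trans (add_le_add ?_ hw)
        simp
    _ = 2 * lam * |c - c'| := by ring

end MeanFieldDrift

lemma one_le_ciSup_div_ciInf {ι : Type*} [Finite ι] [Nonempty ι] {g : ι → ℝ}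
    (hg : ∀ i, 0 < g i) : 1 ≤ (⨆ i, g i) / ⨅ i, g i := by
  obtain ⟨i₀, hi₀⟩ := exists_eq_ciInf_of_finite (f := g)
  rw [one_le_div (hi₀ ▸ hg i₀)]
  exact ciInf_le_ciSup (Set.finite_range g).bddBelow (Set.finite_range g).bddAbove

theorem prelimit_drift_close_sqrt_general (K : ℕ) (hK : 0 < K) (lam gam mu : ℝ)
    (hlam : 0 < lam)
    (KU : ℕ) (g : Fin K → ℝ) (hg : ∀ i, 0 < g i)
    (p : Fin K → Fin K → ℝ)
    (Nn Nstar : ℕ → ℕ) :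
    let F : ℝ → EuclideanSpace ℝ (Fin K) → EuclideanSpace ℝ (Fin K) := fun c y =>
      WithLp.toLp 2 (fun j : Fin K =>
        (∑ k : Fin K, if max KU (j : ℕ) ≤ (k : ℕ) then mu * p k j * y k else 0)
          + (if (j : ℕ) = K - 1 then lam * c else 0)
          - (if KU ≤ (j : ℕ) then mu * y j else 0)
          - lam * c * y j * g j / (∑ i, y i * g i))
    let Δ : Set (EuclideanSpace ℝ (Fin K)) :=
      {y | (∀ i, 0 ≤ y i ∧ y i ≤ 1) ∧ (∑ i, y i) = 1}
    (∀ n, ∀ y ∈ Δ,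
        Real.sqrt (Nn n) * ‖F ((Nstar n : ℝ) / (Nn n)) y - F gam y‖ ≤
          2 * lam * K * ((⨆ i, g i) / (⨅ i, g i)) *
            (Real.sqrt (Nn n) * |(Nstar n : ℝ) / (Nn n) - gam|)) ∧
    (Filter.Tendsto (fun n => Real.sqrt (Nn n) * ((Nstar n : ℝ) / (Nn n) - gam))
        Filter.atTop (nhds 0) →
      Filter.Tendsto
        (fun n => Real.sqrt (Nn n) * ⨆ y ∈ Δ, ‖F ((Nstar n : ℝ) / (Nn n)) y - F gam y‖)
        Filter.atTop (nhds 0)) := by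
  intro F Δ
  have : Nonempty (Fin K) := ⟨⟨0, hK⟩⟩
  set R := (⨆ i, g i) / (⨅ i, g i)
  have hKR : 1 ≤ (K : ℝ) * R :=
    one_le_mul_of_one_le_of_one_le (by exact_mod_cast hK) (one_le_ciSup_div_ciInf hg)
  have hC : 0 ≤ 2 * lam * K * R := by
    rw [mul_assoc]; exact mul_nonneg (by positivity) (zero_le_one.trans hKR)
  have key : ∀ c : ℝ, ∀ y ∈ Δ, ‖F c y - F gam y‖ ≤ 2 * lam * K * R * |c - gam| := fun c y hy =>
    calc ‖F c y - F gam y‖ ≤ 2 * lam * |c - gam| :=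
          norm_meanFieldDrift_sub_le KU lam mu p g hK hlam.le hg c gam
            ⟨fun i => (hy.1 i).1, hy.2⟩
      _ ≤ (K * R) * (2 * lam * |c - gam|) :=
          le_mul_of_one_le_left (by positivity) hKR
      _ = 2 * lam * K * R * |c - gam| := by ring
  have hsup : ∀ c : ℝ, ⨆ y ∈ Δ, ‖F c y - F gam y‖ ≤ 2 * lam * K * R * |c - gam| := fun c =>
    Real.iSup_le (fun y => Real.iSup_le (key c y) (by positivity)) (by positivity)
  refine ⟨fun n y hy => ?_, fun htend => ?_⟩
  · rw [mul_left_comm _ (Real.sqrt _)]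
    gcongr
    exact key _ y hy
  · have hbound : Filter.Tendsto
        (fun n => 2 * lam * K * R * |Real.sqrt (Nn n) * ((Nstar n : ℝ) / (Nn n) - gam)|)
        Filter.atTop (nhds 0) := by
      simpa using htend.abs.const_mul (2 * lam * K * R)
    refine squeeze_zero (fun n => ?_) (fun n => ?_) hbound
    · exact mul_nonneg (Real.sqrt_nonneg _)
        (Real.iSup_nonneg fun y => Real.iSup_nonneg fun _ => norm_nonneg _)
    · rw [abs_mul, abs_of_nonneg (Real.sqrt_nonneg _), mul_left_comm]
      gcongr
      exact hsup _

/-- Diffusion-scaled drift error bound: `√N |F^N(y) − f(y)| ≤ 2 λ K (max g/min g) √N |N*/N − γ|`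
on the simplex; hence `√N(N*/N − γ) → 0` implies `√N sup_{y∈Δ} |F^N(y) − f(y)| → 0`. -/
theorem prelimit_drift_close_sqrt (K : ℕ) (hK : 0 < K) (lam gam mu : ℝ)
    (hlam : 0 < lam) (hgam : 0 < gam) (hmu : 0 < mu)
    (KU : ℕ) (hKU : KU < K) (g : Fin K → ℝ) (hg : ∀ i, 0 < g i)
    (p : Fin K → Fin K → ℝ) (hp0 : ∀ k j, 0 ≤ p k j) (hp1 : ∀ k j, p k j ≤ 1)
    (Nn Nstar : ℕ → ℕ) (hNn : ∀ n, 0 < Nn n) :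
    let F : ℝ → EuclideanSpace ℝ (Fin K) → EuclideanSpace ℝ (Fin K) := fun c y =>
      WithLp.toLp 2 (fun j : Fin K =>
        (∑ k : Fin K, if max KU (j : ℕ) ≤ (k : ℕ) then mu * p k j * y k else 0)
          + (if (j : ℕ) = K - 1 then lam * c else 0)
          - (if KU ≤ (j : ℕ) then mu * y j else 0)
          - lam * c * y j * g j / (∑ i, y i * g i))
    let Δ : Set (EuclideanSpace ℝ (Fin K)) :=
      {y | (∀ i, 0 ≤ y i ∧ y i ≤ 1) ∧ (∑ i, y i) = 1}
    (∀ n, ∀ y ∈ Δ,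
        Real.sqrt (Nn n) * ‖F ((Nstar n : ℝ) / (Nn n)) y - F gam y‖ ≤
          2 * lam * K * ((⨆ i, g i) / (⨅ i, g i)) *
            (Real.sqrt (Nn n) * |(Nstar n : ℝ) / (Nn n) - gam|)) ∧
    (Filter.Tendsto (fun n => Real.sqrt (Nn n) * ((Nstar n : ℝ) / (Nn n) - gam))
        Filter.atTop (nhds 0) →
      Filter.Tendsto
        (fun n => Real.sqrt (Nn n) * ⨆ y ∈ Δ, ‖F ((Nstar n : ℝ) / (Nn n)) y - F gam y‖)
        Filter.atTop (nhds 0)) :=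
  prelimit_drift_close_sqrt_general K hK lam gam mu hlam KU g hg p Nn Nstar
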